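/- Let U ⊆ ℂ be open and let ψ be holomorphic on U with nowhere vanishing derivative ψ'. Define D : U × ℂ → ℂ by D(z,y) = Real.log(|ψ'(z)|²), and define gₙ : U → ℂ recursively by g₁ = ψ''/ψ' and g_{n+1} = deriv gₙ. Then for every n ≥ 1 and every (z,y) ∈ U × ℂ, the n-fold application of the operator X to D satisfies (Xⁿ D)(z,y) = yⁿ · gₙ(z). (This is the explicit action formula δₙ(fU*_ψ) = yⁿ∂ⁿ_z(log ψ') fU*_ψ for the operators δₙ = [X,…[X,D]…].) -/

import Mathlib

/-!
The real differential of `log ‖f‖²` at `z` is `h ↦ Re (2 f'(z) h / f(z))`, so `∂₁ D = ψ''/ψ'` and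
`X D = y · g₁`. On functions `yⁿ g(z)` with `g` holomorphic, `∂₁` is the complex `z`-derivative, so
`X (yⁿ g(z)) = yⁿ⁺¹ g'(z)`. Since `∂₁` only sees the germ of a function, induction on `n` over the
open set `U × ℂ` gives `Xⁿ D = yⁿ gₙ` there.
-/

/-- First-variable Wirtinger derivative ∂₁F(p) = ½(DF(p)(e₁) − i·DF(p)(i·e₁)) for
F : ℂ × ℂ → ℂ, where DF(p) is the real Fréchet derivative of F at p. -/
noncomputable def wirt1 (F : ℂ × ℂ → ℂ) (p : ℂ × ℂ) : ℂ :=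
  (1 / 2 : ℂ) * (fderiv ℝ F p (1, 0) - Complex.I * fderiv ℝ F p (Complex.I, 0))

/-- The operator (X F)(z,y) = y·∂₁F(z,y). -/
noncomputable def Xop (F : ℂ × ℂ → ℂ) : ℂ × ℂ → ℂ := fun p => p.2 * wirt1 F p

open Set Filter Topology ComplexConjugate

lemma Filter.EventuallyEq.wirt1_eq {F G : ℂ × ℂ → ℂ} {p : ℂ × ℂ} (h : F =ᶠ[𝓝 p] G) :
    wirt1 F p = wirt1 G p := by
  simp only [wirt1, h.fderiv_eq]

lemma wirt1_eq_deriv {F : ℂ × ℂ → ℂ} {z y : ℂ} (hF : DifferentiableAt ℂ F (z, y)) :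
    wirt1 F (z, y) = deriv (fun w => F (w, y)) z := by
  have hR : fderiv ℝ F (z, y) = (fderiv ℂ F (z, y)).restrictScalars ℝ :=
    (hF.hasFDerivAt.restrictScalars ℝ).fderiv
  have hI : ((Complex.I, 0) : ℂ × ℂ) = Complex.I • ((1 : ℂ), (0 : ℂ)) := by simp
  have hline : HasDerivAt (fun w => F (w, y)) (fderiv ℂ F (z, y) (1, 0)) z :=
    hF.hasFDerivAt.comp_hasDerivAt z ((hasDerivAt_id z).prodMk (hasDerivAt_const z y))
  rw [hline.deriv, wirt1, hR, hI]
  simp only [ContinuousLinearMap.coe_restrictScalars', map_smul, smul_eq_mul]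
  linear_combination (-1 / 2 : ℂ) * fderiv ℂ F (z, y) (1, 0) * Complex.I_mul_I

lemma Xop_pow_mul {g : ℂ → ℂ} {z : ℂ} (hg : DifferentiableAt ℂ g z) (n : ℕ) (y : ℂ) :
    Xop (fun p => p.2 ^ n * g p.1) (z, y) = y ^ (n + 1) * deriv g z := by
  have hF : DifferentiableAt ℂ (fun p : ℂ × ℂ => p.2 ^ n * g p.1) (z, y) :=
    (differentiableAt_snd.pow n).mul (hg.comp _ differentiableAt_fst)
  rw [Xop, wirt1_eq_deriv hF]
  dsimp only
  rw [deriv_const_mul _ hg, pow_succ]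
  ring

lemma wirt1_ofReal_comp_fst {G : ℂ → ℝ} {L : ℂ →L[ℝ] ℝ} {a z : ℂ} (hG : HasFDerivAt G L z)
    (hL : ∀ h, L h = (a * h).re) (y : ℂ) :
    wirt1 (fun p => (G p.1 : ℂ)) (z, y) = a / 2 := by
  have hF : HasFDerivAt (fun p : ℂ × ℂ => (G p.1 : ℂ))
      (Complex.ofRealCLM.comp (L.comp (ContinuousLinearMap.fst ℝ ℂ ℂ))) (z, y) :=
    Complex.ofRealCLM.hasFDerivAt.comp _ (hG.comp _ hasFDerivAt_fst)
  rw [wirt1, hF.fderiv]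
  simp only [ContinuousLinearMap.comp_apply, ContinuousLinearMap.coe_fst',
    Complex.ofRealCLM_apply, hL, mul_one, Complex.mul_I_re, Complex.ofReal_neg]
  linear_combination (1 / 2 : ℂ) * Complex.re_add_im a

lemma wirt1_log_sq_norm {f : ℂ → ℂ} {c z : ℂ} (hf : HasDerivAt f c z) (hz : f z ≠ 0) (y : ℂ) :
    wirt1 (fun p => (Real.log (‖f p.1‖ ^ 2) : ℂ)) (z, y) = c / f z := by
  have hsq : ‖f z‖ ^ 2 ≠ 0 := by positivity
  have hG : HasFDerivAt (fun w => Real.log (‖f w‖ ^ 2)) _ z :=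
    (hf.hasFDerivAt.restrictScalars ℝ).norm_sq.log hsq
  rw [wirt1_ofReal_comp_fst hG (a := 2 * (c / f z)) _ y]
  · exact mul_div_cancel_left₀ _ two_ne_zero
  · intro h
    have hconj : h * c * conj (f z) = (‖f z‖ ^ 2 : ℝ) * (c / f z * h) := by
      have hn : (‖f z‖ : ℂ) ≠ 0 := by simpa using hz
      push_cast
      field_simp
      linear_combination h * c * Complex.conj_mul' (f z)
    simp only [smul_apply, ContinuousLinearMap.comp_apply,
      ContinuousLinearMap.coe_restrictScalars', ContinuousLinearMap.toSpanSingleton_apply,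
      smul_eq_mul, nsmul_eq_mul, Nat.cast_ofNat, coe_innerSL_apply, Complex.inner, hconj,
      Complex.re_ofReal_mul, mul_assoc]
    rw [← Complex.ofReal_ofNat, Complex.re_ofReal_mul]
    field_simp

lemma differentiableOn_iterate_deriv {U : Set ℂ} (hU : IsOpen U) {g : ℂ → ℂ}
    (hg : DifferentiableOn ℂ g U) (k : ℕ) : DifferentiableOn ℂ (deriv^[k] g) U := by
  induction k with
  | zero => exact hg
  | succ k ih => rw [Function.iterate_succ_apply']; exact ih.deriv hU

lemma eqOn_Xop_of_eqOn {U : Set ℂ} (hU : IsOpen U) {F : ℂ × ℂ → ℂ} {g : ℂ → ℂ}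
    (hg : DifferentiableOn ℂ g U) {n : ℕ} (hF : EqOn F (fun p => p.2 ^ n * g p.1) (U ×ˢ univ)) :
    EqOn (Xop F) (fun p => p.2 ^ (n + 1) * deriv g p.1) (U ×ˢ univ) := by
  rintro ⟨z, y⟩ ⟨hz, -⟩
  have hev : F =ᶠ[𝓝 (z, y)] fun p => p.2 ^ n * g p.1 :=
    hF.eventuallyEq_of_mem ((hU.prod isOpen_univ).mem_nhds ⟨hz, trivial⟩)
  calc Xop F (z, y) = Xop (fun p => p.2 ^ n * g p.1) (z, y) := congrArg (y * ·) hev.wirt1_eq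
    _ = y ^ (n + 1) * deriv g z := Xop_pow_mul (hg.differentiableAt (hU.mem_nhds hz)) n y

lemma eqOn_iterate_Xop {U : Set ℂ} (hU : IsOpen U) {F : ℂ × ℂ → ℂ} {g : ℂ → ℂ}
    (hg : DifferentiableOn ℂ g U) (hF : EqOn (Xop F) (fun p => p.2 * g p.1) (U ×ˢ univ))
    (m : ℕ) : EqOn (Xop^[m + 1] F) (fun p => p.2 ^ (m + 1) * deriv^[m] g p.1) (U ×ˢ univ) := by
  induction m with
  | zero => simpa using hF
  | succ m ih =>
    rw [Function.iterate_succ_apply' Xop, Function.iterate_succ_apply' deriv]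
    exact eqOn_Xop_of_eqOn hU (differentiableOn_iterate_deriv hU hg m) ih

/-- Let ψ be holomorphic on the open set U with nowhere vanishing derivative, let
D(z,y) = Real.log(|ψ'(z)|²) and gₙ = deriv^[n-1] (ψ''/ψ').  Then for n ≥ 1 and
(z,y) ∈ U × ℂ one has (Xⁿ D)(z,y) = yⁿ·gₙ(z). -/
theorem stmt1 (U : Set ℂ) (hU : IsOpen U) (ψ : ℂ → ℂ)
    (hψ : DifferentiableOn ℂ ψ U) (hne : ∀ z ∈ U, deriv ψ z ≠ 0) :
    ∀ n : ℕ, 1 ≤ n → ∀ z ∈ U, ∀ y : ℂ,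
      (Xop^[n] fun p : ℂ × ℂ => (Real.log (‖deriv ψ p.1‖ ^ 2) : ℂ)) (z, y)
        = y ^ n * (deriv^[n - 1] fun w => deriv (deriv ψ) w / deriv ψ w) z := by
  intro n hn z hz y
  obtain ⟨m, rfl⟩ := Nat.exists_eq_add_of_le' hn
  have hψ' : DifferentiableOn ℂ (deriv ψ) U := hψ.deriv hU
  have hX : EqOn (Xop fun p : ℂ × ℂ => (Real.log (‖deriv ψ p.1‖ ^ 2) : ℂ))
      (fun p => p.2 * (deriv (deriv ψ) p.1 / deriv ψ p.1)) (U ×ˢ univ) := by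
    rintro ⟨w, v⟩ ⟨hw, -⟩
    have hψ'' := (hψ'.differentiableAt (hU.mem_nhds hw)).hasDerivAt
    simp only [Xop, wirt1_log_sq_norm hψ'' (hne w hw)]
  rw [Nat.add_sub_cancel]
  exact eqOn_iterate_Xop (g := fun w => deriv (deriv ψ) w / deriv ψ w) hU
    ((hψ'.deriv hU).div hψ' hne) hX m ⟨hz, mem_univ y⟩
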